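/- arXiv:math/0005239 — 2 statements merged into one kernel-verified Lean document; each statement's English description precedes it below -/
import Mathlib

section
/- For an orthogonal direct sum E = E₁ ⊕ E₂ of quadratic spaces, the Clifford algebra Cl(E) is isomorphic to the graded (super) tensor product Cl(E₁) ⊗̂ Cl(E₂). -/
open scoped TensorProduct

/-- For an orthogonal direct sum `E = E₁ ⊕ E₂` of real quadratic spaces (formalized as the
product module with quadratic form `Q₁.prod Q₂`), the Clifford algebra `Cl(E)` is isomorphic
to the ℤ/2-graded (super) tensor product `Cl(E₁) ⊗̂ Cl(E₂)` of the Clifford algebras with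
their even-odd gradings. -/
theorem cliffordAlgebra_prod_equiv_graded_tensor
    {M₁ M₂ : Type*} [AddCommGroup M₁] [AddCommGroup M₂] [Module ℝ M₁] [Module ℝ M₂]
    (Q₁ : QuadraticForm ℝ M₁) (Q₂ : QuadraticForm ℝ M₂) :
    Nonempty (CliffordAlgebra (Q₁.prod Q₂) ≃ₐ[ℝ]
      (CliffordAlgebra.evenOdd Q₁ ᵍ⊗[ℝ] CliffordAlgebra.evenOdd Q₂)) :=
  ⟨CliffordAlgebra.prodEquiv Q₁ Q₂⟩
end

section
/- Let E be an even-dimensional real quadratic space with nondegenerate quadratic form Q such that the volume element ε of Cl(E,Q) satisfies ε² = 1 (Cl(E,Q) is 'positive'). Then Cl(E,Q) is isomorphic as an ℝ-algebra to Cl(E,-Q). -/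
/-!
For even `n` each `ι (e j)` anticommutes with the other `n - 1` factors of `ε` and commutes
with itself, so `ε` anticommutes with every vector. Together with `ε² = 1` this makes
`v ↦ ε ι v` square to `-Q`, so it lifts to `F : Cl(-Q) → Cl(Q)`. Since `ε² = ±∏ Q(eᵢ)` and `n`
is even, the volume element `ε'` of `Cl(-Q)` squares to `1` as well, giving `G : Cl(Q) → Cl(-Q)`
with `v ↦ ε' ι v`. Now `F ε' = ±ε` and `G ε = ±ε'`, so `F ∘ G` and `G ∘ F` multiply vectors by a
sign: each is the identity or the grade involution, hence bijective, and `F` is an isomorphism.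
-/

theorem Nat.choose_two_succ (m : ℕ) : (m + 1).choose 2 = m.choose 2 + m := by
  rw [Nat.choose_succ_succ, Nat.choose_one_right, add_comm]

section AnticommutingProducts

variable {A : Type*} [Ring A]

theorem list_prod_mul_of_forall_mul_eq_neg {x : A} :
    ∀ {l : List A}, (∀ y ∈ l, y * x = -(x * y)) →
      l.prod * x = (-1 : ℤ) ^ l.length • (x * l.prod)
  | [], _ => by simp
  | a :: t, h => by
    have ih := list_prod_mul_of_forall_mul_eq_neg fun y hy => h y (List.mem_cons_of_mem a hy)
    rw [List.prod_cons, mul_assoc, ih, mul_smul_comm, ← mul_assoc, h a List.mem_cons_self]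
    simp only [List.length_cons, pow_succ, mul_neg_one, neg_smul, neg_mul, smul_neg, mul_assoc]

theorem mul_ofFn_prod_of_pairwise_anticomm {n : ℕ} {f : Fin n → A}
    (hf : Pairwise fun i j => f i * f j = -(f j * f i)) (j : Fin n) :
    f j * (List.ofFn f).prod = (-1 : ℤ) ^ (n + 1) • ((List.ofFn f).prod * f j) := by
  induction n with
  | zero => exact j.elim0
  | succ m ih =>
    rw [List.ofFn_succ, List.prod_cons]
    cases j using Fin.cases with
    | zero =>
      have h0 := list_prod_mul_of_forall_mul_eq_neg (x := f 0)
        (l := List.ofFn fun i => f i.succ) (by simpa using fun i => hf (Fin.succ_ne_zero i))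
      rw [List.length_ofFn] at h0
      rw [mul_assoc, h0, mul_smul_comm, smul_smul, ← pow_add, Even.neg_one_pow ⟨m + 1, by ring⟩,
        one_smul]
    | succ j =>
      have ihj := ih (f := fun i => f i.succ) (fun i i' h => hf (Fin.succ_injective _ |>.ne h)) j
      rw [← mul_assoc, hf (Fin.succ_ne_zero j), neg_mul, mul_assoc, ihj, pow_succ (-1 : ℤ) (m + 1),
        mul_neg_one, neg_smul, mul_smul_comm, mul_assoc]

theorem list_prod_map_mul_left_of_forall_mul_eq_neg {u : A} :
    ∀ {l : List A}, (∀ y ∈ l, y * u = -(u * y)) →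
      (l.map (u * ·)).prod = (-1 : ℤ) ^ l.length.choose 2 • (u ^ l.length * l.prod)
  | [], _ => by simp
  | a :: t, h => by
    have ih := list_prod_map_mul_left_of_forall_mul_eq_neg fun y hy =>
      h y (List.mem_cons_of_mem a hy)
    have ha : a * u ^ t.length = (-1 : ℤ) ^ t.length • (u ^ t.length * a) := by
      have hu := list_prod_mul_of_forall_mul_eq_neg (x := a) (l := List.replicate t.length u)
        (by simpa using fun _ => (neg_eq_iff_eq_neg.mpr (h a List.mem_cons_self)).symm)
      rw [List.prod_replicate, List.length_replicate] at hu
      rw [hu, smul_smul, ← mul_pow, neg_one_mul, neg_neg, one_pow, one_smul]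
    rw [List.map_cons, List.prod_cons, ih, mul_smul_comm, mul_assoc, ← mul_assoc a, ha,
      List.length_cons, Nat.choose_two_succ, pow_add, ← smul_smul, smul_mul_assoc, mul_smul_comm,
      pow_succ', List.prod_cons]
    simp only [mul_assoc]

theorem ofFn_prod_mul_self_of_pairwise_anticomm {R : Type*} [CommRing R] [Algebra R A] {n : ℕ}
    {f : Fin n → A} {q : Fin n → R} (hf : Pairwise fun i j => f i * f j = -(f j * f i))
    (hq : ∀ i, f i * f i = algebraMap R A (q i)) :
    (List.ofFn f).prod * (List.ofFn f).prod = algebraMap R A ((-1) ^ n.choose 2 * ∏ i, q i) := by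
  induction n with
  | zero => simp
  | succ m ih =>
    have hT := ih (f := fun i => f i.succ) (q := fun i => q i.succ)
      (fun i i' h => hf (Fin.succ_injective _ |>.ne h)) (fun i => hq i.succ)
    set T := (List.ofFn fun i => f i.succ).prod
    have h0 : T * f 0 = (-1 : ℤ) ^ m • (f 0 * T) := by
      simpa using list_prod_mul_of_forall_mul_eq_neg (x := f 0)
        (l := List.ofFn fun i => f i.succ) (by simpa using fun i => hf (Fin.succ_ne_zero i))
    rw [List.ofFn_succ, List.prod_cons, Fin.prod_univ_succ]
    calc f 0 * T * (f 0 * T) = f 0 * (T * f 0) * T := by simp only [mul_assoc]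
      _ = (-1 : ℤ) ^ m • (f 0 * f 0 * (T * T)) := by
        rw [h0, mul_smul_comm, smul_mul_assoc]; simp only [mul_assoc]
      _ = _ := by
        rw [hq, hT, ← map_mul, ← map_zsmul, Nat.choose_two_succ, zsmul_eq_mul]
        congr 1
        push_cast
        ring

end AnticommutingProducts

namespace CliffordAlgebra

variable {R M : Type*} [CommRing R] [AddCommGroup M] [Module R M] {n : ℕ}

def volumeElement (Q : QuadraticForm R M) (e : Fin n → M) : CliffordAlgebra Q :=
  (List.ofFn fun i => ι Q (e i)).prod

variable {Q Q' : QuadraticForm R M}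

theorem pairwise_ι_mul_ι_eq_neg {e : Fin n → M}
    (horth : Pairwise fun i j => QuadraticMap.polar Q (e i) (e j) = 0) :
    Pairwise fun i j => ι Q (e i) * ι Q (e j) = -(ι Q (e j) * ι Q (e i)) :=
  fun _ _ h => ι_mul_ι_comm_of_isOrtho (QuadraticMap.isOrtho_polarBilin.mp (horth h))

theorem ι_mul_volumeElement (hn : Even n) (e : Module.Basis (Fin n) R M)
    (horth : Pairwise fun i j => QuadraticMap.polar Q (e i) (e j) = 0) (v : M) :
    ι Q v * volumeElement Q e = -(volumeElement Q e * ι Q v) := by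
  have h : LinearMap.mulRight R (volumeElement Q e) ∘ₗ ι Q
      = -(LinearMap.mulLeft R (volumeElement Q e) ∘ₗ ι Q) :=
    e.ext fun j => by
      simpa [volumeElement, hn.add_one.neg_one_pow] using
        mul_ofFn_prod_of_pairwise_anticomm (pairwise_ι_mul_ι_eq_neg horth) j
  simpa using LinearMap.congr_fun h v

theorem volumeElement_mul_self {e : Fin n → M}
    (horth : Pairwise fun i j => QuadraticMap.polar Q (e i) (e j) = 0) :
    volumeElement Q e * volumeElement Q e
      = algebraMap R _ ((-1) ^ n.choose 2 * ∏ i, Q (e i)) :=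
  ofFn_prod_mul_self_of_pairwise_anticomm (pairwise_ι_mul_ι_eq_neg horth) (ι_sq_scalar Q <| e ·)

theorem volumeElement_neg_mul_self (hn : Even n) {e : Fin n → M}
    (horth : Pairwise fun i j => QuadraticMap.polar (-Q) (e i) (e j) = 0) :
    volumeElement (-Q) e * volumeElement (-Q) e
      = algebraMap R _ ((-1) ^ n.choose 2 * ∏ i, Q (e i)) := by
  rw [volumeElement_mul_self horth]
  simp [Finset.prod_neg, hn.neg_one_pow]

theorem exists_algHom_ι_eq_mul (hQ : ∀ v, Q' v = -Q v) {u : CliffordAlgebra Q} (hu : u * u = 1)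
    (hanti : ∀ v, ι Q v * u = -(u * ι Q v)) :
    ∃ F : CliffordAlgebra Q' →ₐ[R] CliffordAlgebra Q, ∀ v, F (ι Q' v) = u * ι Q v := by
  refine ⟨lift Q' ⟨LinearMap.mulLeft R u ∘ₗ ι Q, fun v => ?_⟩, fun v => lift_ι_apply _ _ v⟩
  calc u * ι Q v * (u * ι Q v) = u * (ι Q v * u) * ι Q v := by simp only [mul_assoc]
    _ = -(u * u * (ι Q v * ι Q v)) := by rw [hanti]; noncomm_ring
    _ = algebraMap R _ (Q' v) := by rw [hu, one_mul, ι_sq_scalar, hQ, map_neg]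

theorem map_volumeElement_of_map_ι_eq_mul {u : CliffordAlgebra Q} (hu : u * u = 1)
    (hanti : ∀ v, ι Q v * u = -(u * ι Q v)) (hn : Even n) (e : Fin n → M)
    (F : CliffordAlgebra Q' →ₐ[R] CliffordAlgebra Q) (hF : ∀ v, F (ι Q' v) = u * ι Q v) :
    F (volumeElement Q' e) = (-1 : ℤ) ^ n.choose 2 • volumeElement Q e := by
  have hun : u ^ n = 1 := by
    obtain ⟨m, rfl⟩ := hn
    rw [← two_mul, pow_mul, sq, hu, one_pow]
  have h := list_prod_map_mul_left_of_forall_mul_eq_neg (u := u)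
    (l := List.ofFn fun i => ι Q (e i)) (by simpa using fun i => hanti (e i))
  rw [List.length_ofFn, hun, one_mul, List.map_ofFn] at h
  simp only [volumeElement, map_list_prod, List.map_ofFn, ← h, Function.comp_def, hF]

theorem bijective_of_map_ι_eq_neg_one_pow_smul (φ : CliffordAlgebra Q →ₐ[R] CliffordAlgebra Q)
    (k : ℕ) (h : ∀ v, φ (ι Q v) = (-1 : ℤ) ^ k • ι Q v) : Function.Bijective φ := by
  rcases k.even_or_odd with hk | hk
  · obtain rfl : φ = AlgHom.id R _ :=
      hom_ext <| LinearMap.ext fun v => by simp [h, hk.neg_one_pow]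
    exact Function.bijective_id
  · obtain rfl : φ = involute := hom_ext <| LinearMap.ext fun v => by simp [h, hk.neg_one_pow]
    exact involuteEquiv.bijective

theorem bijective_comp_of_map_ι_eq_mul {u : CliffordAlgebra Q} {u' : CliffordAlgebra Q'}
    (hu : u * u = 1) (F : CliffordAlgebra Q' →ₐ[R] CliffordAlgebra Q)
    (G : CliffordAlgebra Q →ₐ[R] CliffordAlgebra Q')
    (hF : ∀ v, F (ι Q' v) = u * ι Q v) (hG : ∀ v, G (ι Q v) = u' * ι Q' v) {k : ℕ}
    (hFu' : F u' = (-1 : ℤ) ^ k • u) : Function.Bijective (F ∘ G) :=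
  bijective_of_map_ι_eq_neg_one_pow_smul (F.comp G) k fun v => by
    rw [AlgHom.comp_apply, hG, map_mul, hFu', hF, smul_mul_assoc, ← mul_assoc, hu, one_mul]

end CliffordAlgebra

theorem cliffordAlgebra_positive_equiv_neg_general
    {E : Type*} [AddCommGroup E] [Module ℝ E]
    {n : ℕ} (hn : Even n)
    (Q : QuadraticForm ℝ E)
    (e : Module.Basis (Fin n) ℝ E)
    (horth : ∀ i j : Fin n, i ≠ j → QuadraticMap.polar Q (e i) (e j) = 0)
    (hpos : ((List.ofFn fun i : Fin n => CliffordAlgebra.ι Q (e i)).prod) ^ 2 = 1) :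
    Nonempty (CliffordAlgebra Q ≃ₐ[ℝ] CliffordAlgebra (-Q)) := by
  have horth' : Pairwise fun i j => QuadraticMap.polar (-Q) (e i) (e j) = 0 := fun i j h => by
    simp [QuadraticMap.polar_neg, horth i j h]
  set ε := CliffordAlgebra.volumeElement Q e
  set ε' := CliffordAlgebra.volumeElement (-Q) e
  have hε : ε * ε = 1 := (sq ε).symm.trans hpos
  have hε' : ε' * ε' = 1 := by
    have hc := (algebraMap ℝ (CliffordAlgebra Q)).injective <|
      (CliffordAlgebra.volumeElement_mul_self horth).symm.trans (hε.trans (map_one _).symm)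
    rw [CliffordAlgebra.volumeElement_neg_mul_self hn horth', hc, map_one]
  have hanti := CliffordAlgebra.ι_mul_volumeElement hn e horth
  have hanti' := CliffordAlgebra.ι_mul_volumeElement hn e horth'
  obtain ⟨F, hF⟩ := CliffordAlgebra.exists_algHom_ι_eq_mul (Q' := -Q) (fun _ => rfl) hε hanti
  obtain ⟨G, hG⟩ :=
    CliffordAlgebra.exists_algHom_ι_eq_mul (Q' := Q) (fun _ => (neg_neg _).symm) hε' hanti'
  have hFG := CliffordAlgebra.bijective_comp_of_map_ι_eq_mul hε F G hF hG
    (CliffordAlgebra.map_volumeElement_of_map_ι_eq_mul hε hanti hn e F hF)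
  have hGF := CliffordAlgebra.bijective_comp_of_map_ι_eq_mul hε' G F hG hF
    (CliffordAlgebra.map_volumeElement_of_map_ι_eq_mul hε' hanti' hn e G hG)
  exact ⟨(AlgEquiv.ofBijective F ⟨hGF.injective.of_comp, hFG.surjective.of_comp⟩).symm⟩

/-- Let `E` be an even-dimensional real quadratic space with nondegenerate quadratic form `Q`
such that the volume element `ε = ι e₁ ⋯ ι eₙ` (for an orthogonal basis `(eᵢ)`) of `Cl(E, Q)`
satisfies `ε² = 1`.  Then `Cl(E, Q)` is isomorphic as an `ℝ`-algebra to `Cl(E, -Q)`. -/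
theorem cliffordAlgebra_positive_equiv_neg
    {E : Type*} [AddCommGroup E] [Module ℝ E] [FiniteDimensional ℝ E]
    {n : ℕ} (hn : Even n)
    (Q : QuadraticForm ℝ E) (hQnd : LinearMap.BilinForm.Nondegenerate Q.polarBilin)
    (e : Module.Basis (Fin n) ℝ E)
    (horth : ∀ i j : Fin n, i ≠ j → QuadraticMap.polar Q (e i) (e j) = 0)
    (hpos : ((List.ofFn fun i : Fin n => CliffordAlgebra.ι Q (e i)).prod) ^ 2 = 1) :
    Nonempty (CliffordAlgebra Q ≃ₐ[ℝ] CliffordAlgebra (-Q)) :=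
  cliffordAlgebra_positive_equiv_neg_general hn Q e horth hpos
end
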